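/- Let w, z ∈ ℂ and n ∈ ℕ. Then |S_{w,n+1}(z)| ≥ τ(w,z)ⁿ · (√(τ(w,z)² + (Im w)²) − |Im w|), where τ(w,z) = √|Δ_w(z)|, S_{w,2m}(z) = Δ_w(z)^m, and S_{w,2m+1}(z) = Δ_w(z)^m (z−w). -/

import Mathlib

/-- The characteristic polynomial `Δ_w(z) = (z-w)(z-conj w)`. -/
noncomputable def Delta (w z : ℂ) : ℂ := (z - w) * (z - (starRingEnd ℂ) w)

/-- The Cassini pseudo-metric `τ(w,z) = √|Δ_w(z)|`. -/
noncomputable def tau (w z : ℂ) : ℝ := Real.sqrt ‖Delta w z‖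

/-- The complex spherical polynomials: `S_{w,2m}(z) = Δ_w(z)^m`,
`S_{w,2m+1}(z) = Δ_w(z)^m (z−w)`. -/
noncomputable def Sph (w : ℂ) (n : ℕ) (z : ℂ) : ℂ :=
  Delta w z ^ (n / 2) * (if n % 2 = 1 then z - w else 1)

/-!
With `a = |z - w|`, `c = |z - conj w|` and `b = |Im w|` we have `τ² = a c`, and
`|S_{w,n+1}(z)|` equals `τⁿ a` for even `n` and `τⁿ τ` for odd `n`. So it suffices that
`√(τ² + b²) - b` is at most both `a` and `τ`. Since `√(s + b²) - b ≤ x` as soon as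
`s ≤ x (x + 2b)`, this follows from `τ² ≤ τ (τ + 2b)` and from `c ≤ a + 2b`, the triangle
inequality through `w`, as `|w - conj w| = 2b`.
-/

open ComplexConjugate

lemma Real.sqrt_add_sq_sub_le {s b x : ℝ} (hb : 0 ≤ b) (hx : 0 ≤ x)
    (h : s ≤ x * (x + 2 * b)) : √(s + b ^ 2) - b ≤ x := by
  rw [sub_le_iff_le_add, Real.sqrt_le_iff]
  exact ⟨by positivity, by nlinarith⟩

lemma norm_sub_conj_le (w z : ℂ) : ‖z - conj w‖ ≤ ‖z - w‖ + 2 * |w.im| := calc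
  ‖z - conj w‖ = ‖(z - w) + (w - conj w)‖ := by ring_nf
  _ ≤ ‖z - w‖ + ‖w - conj w‖ := norm_add_le _ _
  _ = ‖z - w‖ + 2 * |w.im| := by
    rw [Complex.sub_conj, norm_mul, Complex.norm_I, mul_one]
    norm_cast
    rw [Real.norm_eq_abs, abs_mul, abs_two]

lemma norm_Delta (w z : ℂ) : ‖Delta w z‖ = ‖z - w‖ * ‖z - conj w‖ :=
  norm_mul _ _

lemma tau_nonneg (w z : ℂ) : 0 ≤ tau w z := Real.sqrt_nonneg _

lemma tau_sq (w z : ℂ) : tau w z ^ 2 = ‖Delta w z‖ :=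
  Real.sq_sqrt (norm_nonneg _)

lemma tau_sq_le (w z : ℂ) : tau w z ^ 2 ≤ ‖z - w‖ * (‖z - w‖ + 2 * |w.im|) := by
  rw [tau_sq, norm_Delta]
  exact mul_le_mul_of_nonneg_left (norm_sub_conj_le w z) (norm_nonneg _)

lemma norm_Sph_two_mul (w z : ℂ) (k : ℕ) : ‖Sph w (2 * k) z‖ = tau w z ^ (2 * k) := by
  rw [Sph, pow_mul, tau_sq]
  simp

lemma norm_Sph_two_mul_add_one (w z : ℂ) (k : ℕ) :
    ‖Sph w (2 * k + 1) z‖ = tau w z ^ (2 * k) * ‖z - w‖ := by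
  have hdiv : (2 * k + 1) / 2 = k := by omega
  rw [Sph, hdiv, pow_mul, tau_sq]
  simp

/-- Lower bound for the spherical polynomials:
`|S_{w,n+1}(z)| ≥ τ(w,z)ⁿ·(√(τ(w,z)² + (Im w)²) − |Im w|)`. -/
theorem sph_abs_ge (w z : ℂ) (n : ℕ) :
    tau w z ^ n * (Real.sqrt (tau w z ^ 2 + w.im ^ 2) - |w.im|)
      ≤ ‖Sph w (n + 1) z‖ := by
  rw [← sq_abs w.im]
  have hτn : 0 ≤ tau w z ^ n := pow_nonneg (tau_nonneg w z) n
  rcases Nat.even_or_odd' n with ⟨k, rfl | rfl⟩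
  · rw [norm_Sph_two_mul_add_one]
    exact mul_le_mul_of_nonneg_left
      (Real.sqrt_add_sq_sub_le (abs_nonneg _) (norm_nonneg _) (tau_sq_le w z)) hτn
  · have hτ : tau w z ^ 2 ≤ tau w z * (tau w z + 2 * |w.im|) := by
      nlinarith [tau_nonneg w z, abs_nonneg w.im]
    rw [show 2 * k + 1 + 1 = 2 * (k + 1) by ring, norm_Sph_two_mul,
      show 2 * (k + 1) = 2 * k + 1 + 1 by ring, pow_succ]
    exact mul_le_mul_of_nonneg_left
      (Real.sqrt_add_sq_sub_le (abs_nonneg _) (tau_nonneg w z) hτ) hτn
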